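/- On ℂⁿ \ {0} with r² = |z₁|² + ⋯ + |zₙ|², the metric ω_H = (δ_{ij}/r²)√-1 dz_i∧dz̄_j satisfies Ric(ω_H) = -√-1 ∂∂̄ log(r^{-2n}) = n√-1 ∂∂̄ log r², and ω_H - t·Ric(ω_H) = (1/r²)[(1-nt)δ_{ij} + nt z̄_i z_j/r²] √-1 dz_i∧dz̄_j. In particular ω(t) = ω_H - t·Ric(ω_H) is positive definite for 0 ≤ t < 1/n and solves the Chern-Ricci flow on [0, 1/n). -/

import Mathlib

open Complex
open scoped ComplexOrder

/-- `r² = |z₁|² + ⋯ + |zₙ|²` on `ℂⁿ`. -/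
noncomputable def r2 {n : ℕ} (z : Fin n → ℂ) : ℝ := ∑ i, Complex.normSq (z i)

/-- Wirtinger derivative `∂/∂z_i` of a function on `ℂⁿ`. -/
noncomputable def wdP {n : ℕ} (i : Fin n) (f : (Fin n → ℂ) → ℂ) (z : Fin n → ℂ) : ℂ :=
  (fderiv ℝ f z (Pi.single i 1) - Complex.I * fderiv ℝ f z (Pi.single i Complex.I)) / 2

/-- Wirtinger derivative `∂/∂z̄_i` of a function on `ℂⁿ`. -/
noncomputable def wdbP {n : ℕ} (i : Fin n) (f : (Fin n → ℂ) → ℂ) (z : Fin n → ℂ) : ℂ :=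
  (fderiv ℝ f z (Pi.single i 1) + Complex.I * fderiv ℝ f z (Pi.single i Complex.I)) / 2

/-- The coefficients of the metric `ω_H = (δ_{ij}/r²) √-1 dz_i∧dz̄_j` on `ℂⁿ \ {0}`. -/
noncomputable def gHopf {n : ℕ} (z : Fin n → ℂ) : Matrix (Fin n) (Fin n) ℂ :=
  Matrix.of fun i j => (if i = j then 1 else 0) / ((r2 z : ℝ) : ℂ)

/-- The coefficients of `Ric(ω_H) = n √-1 ∂∂̄ log r²`, namely
`n (δ_{ij}/r² - z̄_i z_j/r⁴)`. -/
noncomputable def RicHopf (n : ℕ) (z : Fin n → ℂ) : Matrix (Fin n) (Fin n) ℂ :=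
  Matrix.of fun i j =>
    (n : ℂ) * ((if i = j then 1 else 0) / ((r2 z : ℝ) : ℂ)
      - (starRingEnd ℂ) (z i) * z j / ((r2 z : ℝ) : ℂ) ^ 2)

/-- The coefficients `(1/r²)[(1-nt)δ_{ij} + nt z̄_i z_j/r²]` of `ω(t) = ω_H - t Ric(ω_H)`. -/
noncomputable def AHopf (n : ℕ) (t : ℝ) (z : Fin n → ℂ) : Matrix (Fin n) (Fin n) ℂ :=
  Matrix.of fun i j =>
    ((((1 - n * t : ℝ)) : ℂ) * (if i = j then 1 else 0)
      + (((n * t : ℝ)) : ℂ) * (starRingEnd ℂ) (z i) * z j / ((r2 z : ℝ) : ℂ)) / ((r2 z : ℝ) : ℂ)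

/-! The coefficients of `∂∂̄ log r²` are `δᵢⱼ/r² - z̄ᵢzⱼ/r⁴`: `∂̄ⱼ φ(r²) = φ'(r²) zⱼ`, and
applying `∂ᵢ` to `zⱼ φ'(r²)` with `φ' = c/s` gives `c (δᵢⱼ/r² - z̄ᵢzⱼ/r⁴)`. Hence
`Ric(ω_H) = n √-1 ∂∂̄ log r²`, and `ω(t) = ω_H - t Ric(ω_H)` is the rank-one perturbation
`((1 - nt)/r²) I + (nt/r⁴) z̄ zᵀ` of a multiple of the identity. It is positive definite when
`0 ≤ nt < 1`, and by the matrix determinant lemma `det ω(t) = (1 - nt)ⁿ⁻¹ r⁻²ⁿ`, a constant multiple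
of `det ω_H`, so `Ric(ω(t)) = Ric(ω_H) = -∂ω/∂t`. -/

section Wirtinger

variable {n : ℕ} {f g : (Fin n → ℂ) → ℂ} {z : Fin n → ℂ}

theorem Filter.EventuallyEq.wdP_eq (h : f =ᶠ[nhds z] g) (i : Fin n) : wdP i f z = wdP i g z := by
  rw [wdP, wdP, h.fderiv_eq]

theorem Filter.EventuallyEq.wdbP_eq (h : f =ᶠ[nhds z] g) (i : Fin n) :
    wdbP i f z = wdbP i g z := by
  rw [wdbP, wdbP, h.fderiv_eq]

theorem Filter.EventuallyEq.wdP_wdbP_eq (h : f =ᶠ[nhds z] g) (i j : Fin n) :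
    wdP i (wdbP j f) z = wdP i (wdbP j g) z :=
  Filter.EventuallyEq.wdP_eq (h.eventuallyEq_nhds.mono fun _ hw => hw.wdbP_eq j) i

theorem wdP_mul (hf : DifferentiableAt ℝ f z) (hg : DifferentiableAt ℝ g z) (i : Fin n) :
    wdP i (fun w => f w * g w) z = wdP i f z * g z + f z * wdP i g z := by
  simp only [wdP, fderiv_fun_mul hf hg, add_apply, smul_apply, smul_eq_mul]
  ring

theorem wdP_coord (i j : Fin n) : wdP i (fun w => w j) z = if i = j then 1 else 0 := by
  rw [wdP, fderiv_apply differentiableAt_id]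
  by_cases h : i = j
  · subst h; simp
  · simp [Ne.symm h, h]

end Wirtinger

section SquaredNorm

variable {n : ℕ}

theorem hasFDerivAt_r2 (z : Fin n → ℂ) :
    HasFDerivAt r2 (∑ k, (2 • innerSL ℝ (z k)).comp (ContinuousLinearMap.proj k)) z := by
  have hr2 : r2 = fun w : Fin n → ℂ => ∑ k, ‖w k‖ ^ 2 := by
    funext w; simp [r2, Complex.normSq_eq_norm_sq]
  rw [hr2]
  exact HasFDerivAt.fun_sum fun k _ => (hasFDerivAt_apply k z).norm_sq

theorem fderiv_r2_single (z : Fin n → ℂ) (i : Fin n) (v : ℂ) :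
    fderiv ℝ r2 z (Pi.single i v) = 2 * (v * starRingEnd ℂ (z i)).re := by
  rw [(hasFDerivAt_r2 z).fderiv, sum_apply, Finset.sum_eq_single i]
  · simp [Complex.inner, mul_add]
  · intro k _ hk; simp [hk]
  · simp

theorem hasFDerivAt_ofReal_comp_r2 {φ : ℝ → ℝ} {φ' : ℝ} {z : Fin n → ℂ}
    (hφ : HasDerivAt φ φ' (r2 z)) :
    HasFDerivAt (fun w => (φ (r2 w) : ℂ)) (Complex.ofRealCLM.comp (φ' • fderiv ℝ r2 z)) z :=
  Complex.ofRealCLM.hasFDerivAt.comp z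
    (hφ.comp_hasFDerivAt z (hasFDerivAt_r2 z).differentiableAt.hasFDerivAt)

theorem wdP_ofReal_comp_r2 {φ : ℝ → ℝ} {φ' : ℝ} {z : Fin n → ℂ}
    (hφ : HasDerivAt φ φ' (r2 z)) (i : Fin n) :
    wdP i (fun w => (φ (r2 w) : ℂ)) z = φ' * starRingEnd ℂ (z i) := by
  rw [wdP, (hasFDerivAt_ofReal_comp_r2 hφ).fderiv]
  apply Complex.ext <;> simp [fderiv_r2_single] <;> ring

theorem wdbP_ofReal_comp_r2 {φ : ℝ → ℝ} {φ' : ℝ} {z : Fin n → ℂ}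
    (hφ : HasDerivAt φ φ' (r2 z)) (j : Fin n) :
    wdbP j (fun w => (φ (r2 w) : ℂ)) z = φ' * z j := by
  rw [wdbP, (hasFDerivAt_ofReal_comp_r2 hφ).fderiv]
  apply Complex.ext <;> simp [fderiv_r2_single] <;> ring

theorem r2_pos {z : Fin n → ℂ} (hz : z ≠ 0) : 0 < r2 z := by
  obtain ⟨i, hi⟩ := Function.ne_iff.mp hz
  exact lt_of_lt_of_le (Complex.normSq_pos.mpr hi)
    (Finset.single_le_sum (fun k _ => Complex.normSq_nonneg (z k)) (Finset.mem_univ i))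

theorem eventually_r2_pos {z : Fin n → ℂ} (hz : z ≠ 0) : ∀ᶠ w in nhds z, 0 < r2 w :=
  (hasFDerivAt_r2 z).continuousAt.eventually (lt_mem_nhds (r2_pos hz))

theorem dotProduct_star_eq_r2 (z : Fin n → ℂ) : z ⬝ᵥ star z = (r2 z : ℂ) := by
  simp [dotProduct, r2, Complex.mul_conj]

end SquaredNorm

theorem wdP_wdbP_ofReal_comp_r2 {n : ℕ} {φ : ℝ → ℝ} {c : ℝ}
    (hφ : ∀ s, 0 < s → HasDerivAt φ (c / s) s) {z : Fin n → ℂ} (hz : z ≠ 0) (i j : Fin n) :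
    wdP i (wdbP j (fun w => (φ (r2 w) : ℂ))) z
      = c * ((if i = j then 1 else 0) / (r2 z : ℂ)
          - starRingEnd ℂ (z i) * z j / (r2 z : ℂ) ^ 2) := by
  have hdbar : wdbP j (fun w => (φ (r2 w) : ℂ)) =ᶠ[nhds z]
      fun w => w j * ((c / r2 w : ℝ) : ℂ) :=
    (eventually_r2_pos hz).mono fun w hw => by
      rw [wdbP_ofReal_comp_r2 (hφ _ hw), mul_comm]
  have hcinv : HasDerivAt (fun s => c / s) (c * -(r2 z ^ 2)⁻¹) (r2 z) := by
    simpa only [div_eq_mul_inv] using (hasDerivAt_inv (r2_pos hz).ne').const_mul c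
  rw [hdbar.wdP_eq, wdP_mul (differentiableAt_apply j z)
    (hasFDerivAt_ofReal_comp_r2 hcinv).differentiableAt, wdP_coord, wdP_ofReal_comp_r2 hcinv]
  push_cast
  ring

theorem hasDerivAt_log_mul_inv_pow {a s : ℝ} (ha : a ≠ 0) (hs : 0 < s) (n : ℕ) :
    HasDerivAt (fun s => Real.log (a * s⁻¹ ^ n)) (-n / s) s := by
  have h : (fun s => Real.log (a * s⁻¹ ^ n)) =ᶠ[nhds s] fun s => Real.log a - n * Real.log s :=
    (lt_mem_nhds hs).mono fun x hx => by
      dsimp only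
      rw [Real.log_mul ha (by positivity), Real.log_pow, Real.log_inv]
      ring
  simpa [neg_div, div_eq_mul_inv] using
    (((Real.hasDerivAt_log hs.ne').const_mul (n : ℝ)).const_sub (Real.log a)).congr_of_eventuallyEq h

theorem one_sub_mul_pos_of_lt_one_div {n : ℕ} {t : ℝ} (ht : t < 1 / n) : 0 < 1 - n * t := by
  rcases n.eq_zero_or_pos with rfl | hn
  · simp
  · have := (lt_div_iff₀ (Nat.cast_pos.mpr hn : (0 : ℝ) < n)).mp ht
    linarith

open Matrix in
theorem Matrix.det_smul_one_add_smul_vecMulVec {K m : Type*} [Field K] [Fintype m] [DecidableEq m]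
    {a : K} (ha : a ≠ 0) (b : K) (u v : m → K) :
    (a • 1 + b • vecMulVec u v).det = a ^ Fintype.card m * (1 + a⁻¹ * b * (v ⬝ᵥ u)) := by
  have h : a • 1 + b • vecMulVec u v
      = a • (1 + replicateCol Unit ((a⁻¹ * b) • u) * replicateRow Unit v) := by
    rw [← vecMulVec_eq, smul_vecMulVec, smul_add, smul_smul, mul_inv_cancel_left₀ ha]
  rw [h, det_smul, det_one_add_replicateCol_mul_replicateRow, dotProduct_smul, smul_eq_mul]

theorem AHopf_eq (n : ℕ) (t : ℝ) (z : Fin n → ℂ) :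
    AHopf n t z = (((1 - n * t) / r2 z : ℝ) : ℂ) • (1 : Matrix (Fin n) (Fin n) ℂ)
      + ((n * t / r2 z ^ 2 : ℝ) : ℂ) • Matrix.vecMulVec (star z) z := by
  ext i j
  simp only [AHopf, Matrix.of_apply, Matrix.add_apply, Matrix.smul_apply, Matrix.one_apply,
    Matrix.vecMulVec_apply, Pi.star_apply, RCLike.star_def, smul_eq_mul]
  push_cast
  ring

theorem det_AHopf {n : ℕ} (t : ℝ) {z : Fin n → ℂ} (hz : z ≠ 0) (ht : 1 - n * t ≠ 0) :
    (AHopf n t z).det = (((1 - n * t) ^ (n - 1) * (r2 z)⁻¹ ^ n : ℝ) : ℂ) := by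
  have hr := (r2_pos hz).ne'
  rw [AHopf_eq, Matrix.det_smul_one_add_smul_vecMulVec
    (Complex.ofReal_ne_zero.mpr (div_ne_zero ht hr)), dotProduct_star_eq_r2, Fintype.card_fin]
  norm_cast
  rcases n with _ | m
  · simp
  · set b : ℝ := (m + 1 : ℕ) * t
    have hsum : 1 + ((1 - b) / r2 z)⁻¹ * (b / r2 z ^ 2) * r2 z = (1 - b)⁻¹ := by
      field_simp
      ring
    rw [hsum, div_pow, pow_succ, inv_pow, Nat.add_sub_cancel]
    field_simp

theorem posDef_AHopf {n : ℕ} {t : ℝ} {z : Fin n → ℂ} (hz : z ≠ 0) (h1 : 0 < 1 - n * t)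
    (h2 : 0 ≤ n * t) : (AHopf n t z).PosDef := by
  rw [AHopf_eq]
  exact (Matrix.PosDef.one.smul (Complex.zero_lt_real.mpr (div_pos h1 (r2_pos hz)))).add_posSemidef
    ((Matrix.posSemidef_vecMulVec_star_self z).smul
      (Complex.zero_le_real.mpr (by have := r2_pos hz; positivity)))

theorem gHopf_sub_mul_RicHopf {n : ℕ} {z : Fin n → ℂ} (hz : z ≠ 0) (t : ℝ) (i j : Fin n) :
    gHopf z i j - t * RicHopf n z i j = AHopf n t z i j := by
  have hr : (r2 z : ℂ) ≠ 0 := Complex.ofReal_ne_zero.mpr (r2_pos hz).ne'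
  simp only [gHopf, RicHopf, AHopf, Matrix.of_apply]
  push_cast
  field_simp
  ring

theorem deriv_AHopf {n : ℕ} {z : Fin n → ℂ} (hz : z ≠ 0) (t : ℝ) (i j : Fin n) :
    deriv (fun s : ℝ => AHopf n s z i j) t = -RicHopf n z i j := by
  simp_rw [← gHopf_sub_mul_RicHopf hz]
  simpa using ((hasDerivAt_id t).ofReal_comp.mul_const (RicHopf n z i j)).const_sub
    (gHopf z i j) |>.deriv

theorem wdP_wdbP_log_det_AHopf {n : ℕ} {t : ℝ} (ht : 0 < 1 - n * t) {z : Fin n → ℂ}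
    (hz : z ≠ 0) (i j : Fin n) :
    wdP i (wdbP j (fun w => Complex.log (AHopf n t w).det)) z
      = (-n : ℝ) * ((if i = j then 1 else 0) / (r2 z : ℂ)
          - starRingEnd ℂ (z i) * z j / (r2 z : ℂ) ^ 2) := by
  have hdet : (fun w => Complex.log (AHopf n t w).det) =ᶠ[nhds z]
      fun w => (Real.log ((1 - n * t) ^ (n - 1) * (r2 w)⁻¹ ^ n) : ℂ) := by
    filter_upwards [isOpen_ne.mem_nhds hz, eventually_r2_pos hz] with w hw hrw
    rw [det_AHopf t hw ht.ne', ← Complex.ofReal_log (by positivity)]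
  rw [hdet.wdP_wdbP_eq, wdP_wdbP_ofReal_comp_r2
    (fun s hs => hasDerivAt_log_mul_inv_pow (pow_pos ht _).ne' hs n) hz]

/-- On `ℂⁿ \ {0}` the metric `ω_H = (δ_{ij}/r²)√-1 dz_i∧dz̄_j` satisfies
`Ric(ω_H) = -√-1 ∂∂̄ log (r^{-2n}) = n √-1 ∂∂̄ log r²`, and
`ω_H - t Ric(ω_H) = (1/r²)[(1-nt)δ_{ij} + nt z̄_i z_j/r²] √-1 dz_i∧dz̄_j`.
In particular `ω(t) = ω_H - t Ric(ω_H)` is positive definite for `0 ≤ t < 1/n` and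
solves the Chern-Ricci flow on `[0, 1/n)` (its Chern-Ricci form is constant in time,
equal to `Ric(ω_H)`, and `∂ω/∂t = -Ric(ω(t))`). -/
theorem stmt3 (n : ℕ) (z : Fin n → ℂ) (hz : z ≠ 0) :
    (∀ i j : Fin n,
      -wdP i (wdbP j (fun w => ((Real.log ((r2 w)⁻¹ ^ n) : ℝ) : ℂ))) z
          = (n : ℂ) * wdP i (wdbP j (fun w => ((Real.log (r2 w) : ℝ) : ℂ))) z ∧
      -wdP i (wdbP j (fun w => ((Real.log ((r2 w)⁻¹ ^ n) : ℝ) : ℂ))) z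
          = RicHopf n z i j) ∧
    (∀ t : ℝ, ∀ i j : Fin n, gHopf z i j - (t : ℂ) * RicHopf n z i j = AHopf n t z i j) ∧
    (∀ t : ℝ, 0 ≤ t → t < 1 / n → (AHopf n t z).PosDef) ∧
    (∀ t : ℝ, 0 ≤ t → t < 1 / n → ∀ i j : Fin n,
      (-wdP i (wdbP j (fun w => Complex.log ((AHopf n t w).det))) z = RicHopf n z i j) ∧
      deriv (fun s : ℝ => AHopf n s z i j) t = -RicHopf n z i j) := by
  have hlog (s : ℝ) (hs : 0 < s) : HasDerivAt Real.log (1 / s) s := by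
    simpa only [one_div] using Real.hasDerivAt_log hs.ne'
  have hlogInvPow (s : ℝ) (hs : 0 < s) :
      HasDerivAt (fun s => Real.log (s⁻¹ ^ n)) (-n / s) s := by
    simpa only [one_mul] using hasDerivAt_log_mul_inv_pow one_ne_zero hs n
  refine ⟨fun i j => ?_, gHopf_sub_mul_RicHopf hz, fun t ht0 ht1 => ?_,
    fun t _ ht1 i j => ⟨?_, deriv_AHopf hz t i j⟩⟩
  · rw [wdP_wdbP_ofReal_comp_r2 hlogInvPow hz, wdP_wdbP_ofReal_comp_r2 hlog hz, RicHopf,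
      Matrix.of_apply]
    push_cast
    constructor <;> ring
  · exact posDef_AHopf hz (one_sub_mul_pos_of_lt_one_div ht1) (mul_nonneg n.cast_nonneg ht0)
  · rw [wdP_wdbP_log_det_AHopf (one_sub_mul_pos_of_lt_one_div ht1) hz, RicHopf, Matrix.of_apply]
    push_cast
    ring
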